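/- Let G be a graph, let ~ be the equivalence relation on V(G) defined by u ~ v iff N(u) \ {v} = N(v) \ {u}, and let c ≥ 2. Let S be a minimum-size vertex set such that G - S is c-closed. Then for every equivalence class D of ~, either D ∩ S = ∅ or |D \ S| < c. -/

import Mathlib

/-!
If a vertex `s ∈ S` lies in a neighborhood class `D` with at least `c` survivors in `G - S`, then
`S.erase s` is already a solution, contradicting minimality. Putting `s` back cannot create a bad
pair: if `s` were a common neighbour of two nonadjacent survivors `a, b`, then so would be every
survivor of `D`, giving `a, b` at least `c` common neighbours in `G - S`; and for a pair `s, b`,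
a surviving twin `v ≠ b` of `s` (it exists as `c ≥ 2`) is not adjacent to `b` and has in `G - S`
all the common neighbours of `s` and `b`.
-/

def IsCClosed {V : Type*} (G : SimpleGraph V) (c : ℕ) : Prop :=
  ∀ u v : V, u ≠ v → ¬ G.Adj u v → (G.commonNeighbors u v).ncard < c

namespace SimpleGraph

variable {V : Type*} {G : SimpleGraph V}

/-- The relation `~` (true or false twins); its classes are the neighborhood classes. -/
def IsTwin (G : SimpleGraph V) (u v : V) : Prop :=
  G.neighborSet u \ {v} = G.neighborSet v \ {u}

namespace IsTwin

variable {u v w z : V}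

theorem symm (h : G.IsTwin u v) : G.IsTwin v u := Eq.symm h

theorem adj (h : G.IsTwin u v) (huz : G.Adj u z) (hzv : z ≠ v) : G.Adj v z := by
  have hz : z ∈ G.neighborSet u \ {v} := ⟨huz, hzv⟩
  rw [h] at hz
  exact hz.1

theorem adj_of_isTwin (huw : G.IsTwin u w) (hwv : G.IsTwin w v) (huz : G.Adj u z)
    (hzv : z ≠ v) : G.Adj v z := by
  by_cases hzw : z = w
  · subst hzw
    by_cases huv : u = v
    · exact huv ▸ huz
    exact (huw.adj (hwv.adj huz.symm huv).symm hzv.symm).symm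
  · exact hwv.adj (huw.adj huz hzw) hzv

theorem trans (huw : G.IsTwin u w) (hwv : G.IsTwin w v) : G.IsTwin u v := by
  ext z
  constructor
  · rintro ⟨huz, hzv⟩
    exact ⟨huw.adj_of_isTwin hwv huz hzv, (G.ne_of_adj huz).symm⟩
  · rintro ⟨hvz, hzu⟩
    exact ⟨hwv.symm.adj_of_isTwin huw.symm hvz hzu, (G.ne_of_adj hvz).symm⟩

theorem mem_commonNeighbors {x a b : V} (h : G.IsTwin x v) (hab : a ≠ b) (hnadj : ¬G.Adj a b)
    (hx : x ∈ G.commonNeighbors a b) : v ∈ G.commonNeighbors a b := by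
  obtain ⟨hax, hbx⟩ := G.mem_commonNeighbors.1 hx
  have hva : v ≠ a := by
    rintro rfl
    exact hnadj (h.adj hbx.symm hab.symm)
  have hvb : v ≠ b := by
    rintro rfl
    exact hnadj (h.adj hax.symm hab).symm
  exact G.mem_commonNeighbors.2 ⟨(h.adj hax.symm hva.symm).symm, (h.adj hbx.symm hvb.symm).symm⟩

end IsTwin

theorem image_val_commonNeighbors_induce (s : Set V) (a b : s) :
    Subtype.val '' (G.induce s).commonNeighbors a b = G.commonNeighbors a b ∩ s := by
  ext z
  simp [mem_commonNeighbors, and_comm (b := z ∈ s)]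

theorem ncard_commonNeighbors_induce (s : Set V) (a b : s) :
    ((G.induce s).commonNeighbors a b).ncard = (G.commonNeighbors a b ∩ s).ncard := by
  rw [← image_val_commonNeighbors_induce, Set.ncard_image_of_injective _ Subtype.val_injective]

theorem isCClosed_induce_iff {s : Set V} {c : ℕ} :
    IsCClosed (G.induce s) c ↔
      ∀ a ∈ s, ∀ b ∈ s, a ≠ b → ¬G.Adj a b → (G.commonNeighbors a b ∩ s).ncard < c := by
  simp only [IsCClosed, ncard_commonNeighbors_induce]
  constructor
  · intro h a ha b hb hab hnadj
    exact h ⟨a, ha⟩ ⟨b, hb⟩ (by simpa using hab) hnadj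
  · rintro h ⟨a, ha⟩ ⟨b, hb⟩ hab hnadj
    exact h a ha b hb (by simpa using hab) hnadj

section Reinsert

variable [Finite V] {R : Set V} {c : ℕ} {x a b : V}

theorem notMem_commonNeighbors_of_isCClosed (hR : IsCClosed (G.induce R) c)
    (htw : c ≤ ({v | G.IsTwin x v} ∩ R).ncard) (ha : a ∈ R) (hb : b ∈ R) (hab : a ≠ b)
    (hnadj : ¬G.Adj a b) : x ∉ G.commonNeighbors a b := by
  intro hx
  have hsub : {v | G.IsTwin x v} ∩ R ⊆ G.commonNeighbors a b ∩ R :=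
    fun v ⟨hv, hvR⟩ => ⟨hv.mem_commonNeighbors hab hnadj hx, hvR⟩
  have := Set.ncard_le_ncard hsub
  have := isCClosed_induce_iff.1 hR a ha b hb hab hnadj
  omega

theorem ncard_commonNeighbors_inter_insert_lt (hR : IsCClosed (G.induce R) c) (hc : 2 ≤ c)
    (htw : c ≤ ({v | G.IsTwin x v} ∩ R).ncard) (hb : b ∈ R) (hxb : x ≠ b)
    (hnadj : ¬G.Adj x b) : (G.commonNeighbors x b ∩ insert x R).ncard < c := by
  obtain ⟨v, ⟨hv, hvR⟩, hvb⟩ :=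
    Set.exists_ne_of_one_lt_ncard (s := {v | G.IsTwin x v} ∩ R) (by omega) b
  have hvb_nadj : ¬G.Adj v b := fun h => hnadj (hv.symm.adj h hxb.symm)
  have hsub : G.commonNeighbors x b ∩ insert x R ⊆ G.commonNeighbors v b ∩ R := by
    rintro z ⟨hz, hzR⟩
    obtain ⟨hxz, hbz⟩ := G.mem_commonNeighbors.1 hz
    have hzv : z ≠ v := by
      rintro rfl
      exact hvb_nadj hbz.symm
    exact ⟨G.mem_commonNeighbors.2 ⟨hv.adj hxz hzv, hbz⟩,
      hzR.resolve_left (G.ne_of_adj hxz).symm⟩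
  calc (G.commonNeighbors x b ∩ insert x R).ncard
      ≤ (G.commonNeighbors v b ∩ R).ncard := Set.ncard_le_ncard hsub
    _ < c := isCClosed_induce_iff.1 hR v hvR b hb hvb hvb_nadj

theorem isCClosed_induce_insert_of_twins (hR : IsCClosed (G.induce R) c) (hc : 2 ≤ c)
    (htw : c ≤ ({v | G.IsTwin x v} ∩ R).ncard) : IsCClosed (G.induce (insert x R)) c := by
  rw [isCClosed_induce_iff]
  rintro a (rfl | ha) b (rfl | hb) hab hnadj
  · exact absurd rfl hab
  · exact ncard_commonNeighbors_inter_insert_lt hR hc htw hb hab hnadj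
  · rw [commonNeighbors_symm]
    exact ncard_commonNeighbors_inter_insert_lt hR hc htw ha hab.symm (fun h => hnadj h.symm)
  · rw [Set.inter_insert_of_notMem (notMem_commonNeighbors_of_isCClosed hR htw ha hb hab hnadj)]
    exact isCClosed_induce_iff.1 hR a ha b hb hab hnadj

end Reinsert

end SimpleGraph

/-- Let `S` be a minimum-size vertex set whose deletion makes `G` `c`-closed
(`c ≥ 2`). Then for every neighborhood class `D` (equivalence class of the relation
`u ~ v ↔ N(u) \ {v} = N(v) \ {u}`), either `S` avoids `D` entirely, or fewer than `c`
vertices of `D` survive the deletion. -/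
theorem neighborhoodClass_solution_structure {V : Type*} [Fintype V]
    (G : SimpleGraph V) (c : ℕ) (hc : 2 ≤ c)
    (S : Finset V)
    (hS : IsCClosed (G.induce ((↑S : Set V)ᶜ)) c)
    (hmin : ∀ T : Finset V,
      IsCClosed (G.induce ((↑T : Set V)ᶜ)) c → S.card ≤ T.card)
    (w : V) :
    ({v : V | G.neighborSet v \ {w} = G.neighborSet w \ {v}} ∩ ↑S = ∅) ∨
      ({v : V | G.neighborSet v \ {w} = G.neighborSet w \ {v}} \ ↑S).ncard < c := by
  classical
  by_contra! h
  obtain ⟨⟨s, (hsw : G.IsTwin s w), hsS⟩, hcard⟩ := h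
  have hclass : {v | G.IsTwin s v} ∩ (↑S : Set V)ᶜ =
      {v : V | G.neighborSet v \ {w} = G.neighborSet w \ {v}} \ ↑S := by
    ext v
    exact and_congr_left' (⟨fun hsv => hsv.symm.trans hsw, fun hvw => hsw.trans hvw.symm⟩ :
      G.IsTwin s v ↔ G.IsTwin v w)
  have htw : c ≤ ({v | G.IsTwin s v} ∩ (↑S : Set V)ᶜ).ncard := hclass ▸ hcard
  have herase : insert s (↑S : Set V)ᶜ = (↑(S.erase s) : Set V)ᶜ := by
    ext v
    by_cases hv : v = s <;> simp [hv, hsS]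
  have hT := SimpleGraph.isCClosed_induce_insert_of_twins hS hc htw
  rw [herase] at hT
  have := hmin _ hT
  have := Finset.card_erase_lt_of_mem hsS
  omega
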